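/- arXiv:1409.6748 — 4 statements merged into one kernel-verified Lean document; each statement's English description precedes it below -/
import Mathlib

section
/- Let Γ be a chordal graph equipped with a perfect elimination ordering on its vertices, and order each edge e by its larger endpoint h(e) (breaking ties by the smaller endpoint t(e)). Then a set S of edges is an nbc set (contains no broken circuit) if and only if for all distinct edges e, e' in S one has h(e) ≠ h(e'). -/
open SimpleGraph

section Defs

variable {V : Type*}

/-- The larger endpoint (head) of an edge, with respect to a linear order on vertices. -/
def esup [LinearOrder V] (e : Sym2 V) : V :=
  Sym2.lift ⟨fun a b => a ⊔ b, fun a b => sup_comm a b⟩ e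

/-- The smaller endpoint (tail) of an edge. -/
def einf [LinearOrder V] (e : Sym2 V) : V :=
  Sym2.lift ⟨fun a b => a ⊓ b, fun a b => inf_comm a b⟩ e

/-- The order on edges induced by a linear order on vertices:
`e < e'` iff `h(e) < h(e')`, or `h(e) = h(e')` and `t(e) < t(e')`. -/
def edgeLT [LinearOrder V] (e f : Sym2 V) : Prop :=
  esup e < esup f ∨ (esup e = esup f ∧ einf e < einf f)

/-- The linear order on the vertices is a perfect elimination ordering: every vertex is
simplicial in the induced subgraph on the vertices below it. -/
def IsPEO [LinearOrder V] (G : SimpleGraph V) : Prop :=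
  ∀ v u w : V, u < v → w < v → u ≠ w → G.Adj u v → G.Adj w v → G.Adj u w

/-- A cycle (walk) in a graph has a chord. -/
def SimpleGraph.Walk.HasChord {G : SimpleGraph V} {v : V} (c : G.Walk v v) : Prop :=
  ∃ a b : V, a ∈ c.support ∧ b ∈ c.support ∧ G.Adj a b ∧ s(a, b) ∉ c.edges

/-- A graph is chordal if every cycle with more than three vertices has a chord. -/
def SimpleGraph.IsChordal (G : SimpleGraph V) : Prop :=
  ∀ (v : V) (c : G.Walk v v), c.IsCycle → 3 < c.length → c.HasChord

/-- `S` is the edge set of a cycle of `G`. -/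
def IsCycleEdges [DecidableEq V] (G : SimpleGraph V) (S : Finset (Sym2 V)) : Prop :=
  ∃ (v : V) (c : G.Walk v v), c.IsCycle ∧ c.edges.toFinset = S

/-- `S` is a broken circuit: there is an edge `e` smaller than every element of `S` such that
`S ∪ {e}` is the edge set of a cycle. -/
def IsBrokenCircuit [LinearOrder V] (G : SimpleGraph V) (S : Finset (Sym2 V)) : Prop :=
  ∃ e : Sym2 V, e ∉ S ∧ (∀ f ∈ S, edgeLT e f) ∧ IsCycleEdges G (insert e S)

/-- `S` is an nbc set: a set of edges of `G` no subset of which is a broken circuit. -/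
def IsNBC [LinearOrder V] (G : SimpleGraph V) (S : Finset (Sym2 V)) : Prop :=
  ↑S ⊆ G.edgeSet ∧ ∀ T ⊆ S, ¬IsBrokenCircuit G T

end Defs

/-! In a cycle the largest vertex lies on two edges, and these have the largest head among the
edges of the cycle. If `T ∪ {e}` is a cycle with `e` below every edge of `T` and the heads in `T`
are distinct, one of these two edges is therefore `e` and the other lies in `T`; any third edge of
the cycle lies in `T` and exceeds `e`, so it also has the maximal head, a contradiction.
Conversely, two edges `uv`, `wv` with common head `v` close, by the perfect elimination property,
to a triangle whose third edge `uw` lies below both of them. -/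

section EdgeEndpoints

variable {V : Type*} [LinearOrder V]

@[simp] lemma esup_mk (a b : V) : esup s(a, b) = a ⊔ b := rfl

@[simp] lemma einf_mk (a b : V) : einf s(a, b) = a ⊓ b := rfl

lemma mk_einf_esup (e : Sym2 V) : s(einf e, esup e) = e := by
  induction e using Sym2.ind with
  | _ a b =>
    rcases le_total a b with h | h
    · simp [h]
    · simp [h, Sym2.eq_swap]

lemma le_esup_of_mem {x : V} {e : Sym2 V} (h : x ∈ e) : x ≤ esup e := by
  induction e using Sym2.ind with
  | _ a b =>
    rcases Sym2.mem_iff.mp h with rfl | rfl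
    · exact le_sup_left
    · exact le_sup_right

lemma einf_lt_esup {e : Sym2 V} (h : ¬e.IsDiag) : einf e < esup e := by
  induction e using Sym2.ind with
  | _ a b => exact inf_lt_sup.2 (by simpa using h)

end EdgeEndpoints

namespace SimpleGraph.Walk

variable {V : Type*} {G : SimpleGraph V} {v : V}

lemma IsCycle.exists_edges_ne_of_mem_support [DecidableEq V] {c : G.Walk v v}
    (hc : c.IsCycle) {x : V} (hx : x ∈ c.support) :
    ∃ g₁ ∈ c.edges, ∃ g₂ ∈ c.edges, g₁ ≠ g₂ ∧ x ∈ g₁ ∧ x ∈ g₂ := by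
  set d := c.rotate x hx
  have hd : d.IsCycle := hc.rotate hx
  have hmem : ∀ {g}, g ∈ d.edges → g ∈ c.edges := (c.rotate_edges x hx).perm.mem_iff.1
  refine ⟨s(x, d.snd), hmem (d.mk_start_snd_mem_edges hd.not_nil), s(x, d.penultimate),
    hmem (Sym2.eq_swap ▸ d.mk_penultimate_end_mem_edges hd.not_nil), ?_, by simp, by simp⟩
  rw [Ne, Sym2.congr_right]
  exact hd.snd_ne_penultimate

lemma esup_mem_support [LinearOrder V] {u : V} {p : G.Walk u v} {g : Sym2 V}
    (hg : g ∈ p.edges) : esup g ∈ p.support :=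
  p.snd_mem_support_of_mem_edges (t := einf g) (by rwa [mk_einf_esup])

lemma IsCycle.exists_edges_ne_esup_eq_max [LinearOrder V] {c : G.Walk v v} (hc : c.IsCycle) :
    ∃ g₁ ∈ c.edges, ∃ g₂ ∈ c.edges,
      g₁ ≠ g₂ ∧ esup g₁ = esup g₂ ∧ ∀ g ∈ c.edges, esup g ≤ esup g₁ := by
  obtain ⟨M, hM, hmax⟩ := c.support.toFinset.exists_max_image id ⟨v, by simp⟩
  obtain ⟨g₁, hg₁, g₂, hg₂, hne, hM₁, hM₂⟩ :=
    hc.exists_edges_ne_of_mem_support (List.mem_toFinset.1 hM)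
  have hle : ∀ g ∈ c.edges, esup g ≤ M :=
    fun g hg => hmax _ (List.mem_toFinset.2 (esup_mem_support hg))
  have h₁ : esup g₁ = M := le_antisymm (hle g₁ hg₁) (le_esup_of_mem hM₁)
  have h₂ : esup g₂ = M := le_antisymm (hle g₂ hg₂) (le_esup_of_mem hM₂)
  exact ⟨g₁, hg₁, g₂, hg₂, hne, h₁.trans h₂.symm, h₁ ▸ hle⟩

end SimpleGraph.Walk

section BrokenCircuits

variable {V : Type*} {G : SimpleGraph V}

lemma isCycleEdges_triangle [DecidableEq V] {u v w : V} (huv : G.Adj u v) (hvw : G.Adj v w)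
    (hwu : G.Adj w u) : IsCycleEdges G {s(w, u), s(u, v), s(v, w)} := by
  refine ⟨w, .cons hwu (.cons huv (.cons hvw .nil)), ?_, by simp⟩
  have := huv.ne; have := hvw.ne; have := hwu.ne
  simp [SimpleGraph.Walk.cons_isCycle_iff, SimpleGraph.Walk.cons_isPath_iff]
  grind

variable [LinearOrder V]

lemma IsPEO.isBrokenCircuit_pair (hpeo : IsPEO G) {e f : Sym2 V} (he : e ∈ G.edgeSet)
    (hf : f ∈ G.edgeSet) (hne : e ≠ f) (hsup : esup e = esup f) : IsBrokenCircuit G {e, f} := by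
  obtain ⟨u, w, v, rfl, rfl, hu, hw⟩ :
      ∃ u w v, e = s(u, v) ∧ f = s(w, v) ∧ u < v ∧ w < v :=
    ⟨einf e, einf f, esup f, by rw [← hsup, mk_einf_esup], (mk_einf_esup f).symm,
      hsup ▸ einf_lt_esup (G.not_isDiag_of_mem_edgeSet he),
      einf_lt_esup (G.not_isDiag_of_mem_edgeSet hf)⟩
  have huw : u ≠ w := fun h => hne (h ▸ rfl)
  rw [mem_edgeSet] at he hf
  refine ⟨s(w, u), ?_, ?_, ?_⟩
  · simp [hu.ne, hw.ne, huw.symm]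
  · simp [edgeLT, hu, hw]
  · rw [Sym2.eq_swap (a := w) (b := v)]
    exact isCycleEdges_triangle he hf.symm (hpeo v w u hw hu huw.symm hf he)

lemma not_isBrokenCircuit_of_esup_ne {T : Finset (Sym2 V)}
    (hT : ∀ e ∈ T, ∀ f ∈ T, e ≠ f → esup e ≠ esup f) : ¬IsBrokenCircuit G T := by
  rintro ⟨e, heT, hlt, v, c, hc, hedges⟩
  have hmem : ∀ {g}, g ∈ c.edges → g ∈ insert e T :=
    fun hg => hedges ▸ List.mem_toFinset.2 hg
  obtain ⟨g₁, hg₁, g₂, hg₂, hne, hsup, hmax⟩ := hc.exists_edges_ne_esup_eq_max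
  have hmax_T : ∀ g ∈ T, esup g ≤ esup g₁ := fun g hg =>
    hmax g (List.mem_toFinset.1 (hedges ▸ Finset.mem_insert_of_mem hg))
  obtain ⟨f, hfT, hfe⟩ : ∃ f ∈ T, esup f = esup e ∧ esup e = esup g₁ := by
    rcases Finset.mem_insert.1 (hmem hg₁) with rfl | h₁ <;>
      rcases Finset.mem_insert.1 (hmem hg₂) with rfl | h₂
    exacts [absurd rfl hne, ⟨g₂, h₂, hsup.symm, rfl⟩, ⟨g₁, h₁, hsup, hsup.symm⟩,
      absurd hsup (hT g₁ h₁ g₂ h₂ hne)]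
  have hcard : 1 < T.card := by
    have h3 : 3 ≤ (insert e T).card := by
      rw [← hedges, List.toFinset_card_of_nodup hc.edges_nodup, c.length_edges]
      exact hc.three_le_length
    grind [Finset.card_insert_of_notMem heT]
  obtain ⟨f', hf'T, hf'f⟩ := Finset.exists_mem_ne hcard f
  rcases hlt f' hf'T with h | ⟨h, -⟩
  · exact (hfe.2 ▸ h).not_ge (hmax_T f' hf'T)
  · exact hT f' hf'T f hfT hf'f (by rw [← h, hfe.1])

end BrokenCircuits

theorem stmt_1_general {V : Type*} [LinearOrder V] (G : SimpleGraph V)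
    (hpeo : IsPEO G) (S : Finset (Sym2 V)) (hS : ↑S ⊆ G.edgeSet) :
    IsNBC G S ↔ ∀ e ∈ S, ∀ f ∈ S, e ≠ f → esup e ≠ esup f := by
  refine ⟨fun ⟨_, hnbc⟩ e he f hf hne hsup => ?_, fun hheads => ⟨hS, fun T hT => ?_⟩⟩
  · exact hnbc {e, f} (Finset.insert_subset he (Finset.singleton_subset_iff.2 hf))
      (hpeo.isBrokenCircuit_pair (hS he) (hS hf) hne hsup)
  · exact not_isBrokenCircuit_of_esup_ne fun e he f hf => hheads e (hT he) f (hT hf)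

/-- For a chordal graph with a perfect elimination ordering, a set of edges is nbc if and only
if all of its edges have distinct larger endpoints. -/
theorem stmt_1 {V : Type*} [Fintype V] [LinearOrder V] (G : SimpleGraph V)
    (hchordal : G.IsChordal) (hpeo : IsPEO G) (S : Finset (Sym2 V)) (hS : ↑S ⊆ G.edgeSet) :
    IsNBC G S ↔ ∀ e ∈ S, ∀ f ∈ S, e ≠ f → esup e ≠ esup f :=
  stmt_1_general G hpeo S hS
end

section
/- Let Γ = (V, E) be a graph and F a flat of its graphic matroid, and let S be a spanning forest of Γ[F] in which all edges have distinct larger endpoints. Consider the matrix M_F over ℚ with rows indexed by edges e ∈ F and columns indexed by V in decreasing order, with (M_F)_{e,h(e)} = 1, (M_F)_{e,t(e)} = -1, and all other entries 0. Then the row space of M_F equals the row space of the submatrix with rows indexed by S, and this submatrix has rank |S| with pivot columns exactly {h(e) : e ∈ S}. -/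
open SimpleGraph

/-- `S` spans the subgraph `Γ[F]`. -/
def SpansFlat {V : Type*} (F S : Set (Sym2 V)) : Prop :=
  ∀ u w : V, s(u, w) ∈ F → (SimpleGraph.fromEdgeSet S).Reachable u w

/-- The row of the matrix `M_F` indexed by an edge `e`: entry `1` in column `h(e)`,
entry `-1` in column `t(e)`, and `0` elsewhere. -/
noncomputable def edgeRow {V : Type*} [LinearOrder V] (e : Sym2 V) : V → ℚ :=
  fun v => if v = esup e then 1 else if v = einf e then -1 else 0

/-- In a vanishing combination, the row with the largest pivot among those with a nonzero
coefficient is the only one contributing to its pivot column. -/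
theorem linearIndependent_of_pivot {ι α K : Type*} [LinearOrder α] [Field K] {v : ι → α → K}
    {p : ι → α} (hp : Function.Injective p) (hpivot : ∀ i, v i (p i) ≠ 0)
    (hright : ∀ i a, p i < a → v i a = 0) : LinearIndependent K v := by
  classical
  rw [linearIndependent_iff']
  intro s g hsum i hi
  by_contra hgi
  obtain ⟨j, hj, hmax⟩ := (s.filter (g · ≠ 0)).exists_max_image p ⟨i, by simp [hi, hgi]⟩
  rw [Finset.mem_filter] at hj
  have hcol : (∑ k ∈ s, g k • v k) (p j) = g j * v j (p j) := by
    rw [Finset.sum_apply, Finset.sum_eq_single_of_mem j hj.1]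
    · rfl
    intro k hk hkj
    by_cases hgk : g k = 0
    · simp [hgk]
    have hlt : p k < p j :=
      (hmax k (Finset.mem_filter.2 ⟨hk, hgk⟩)).lt_of_ne (hp.ne hkj)
    simp [hright k _ hlt]
  rw [hsum] at hcol
  exact mul_ne_zero hj.2 (hpivot j) (by simpa using hcol.symm)

section EdgeRow

variable {V : Type*} [LinearOrder V]

lemma einf_le_esup (e : Sym2 V) : einf e ≤ esup e := by
  induction e using Sym2.ind with
  | _ a b => exact inf_le_sup

lemma mk_esup_einf (e : Sym2 V) : s(esup e, einf e) = e := by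
  induction e using Sym2.ind with
  | _ a b =>
    rcases le_total a b with h | h
    · simp [esup, einf, h, Sym2.eq_swap]
    · simp [esup, einf, h]

lemma edgeRow_esup (e : Sym2 V) : edgeRow e (esup e) = 1 := by
  simp [edgeRow]

lemma edgeRow_eq_zero_of_esup_lt {e : Sym2 V} {v : V} (h : esup e < v) : edgeRow e v = 0 := by
  simp [edgeRow, h.ne', ((einf_le_esup e).trans_lt h).ne']

lemma edgeRow_eq_single_sub_single {e : Sym2 V} (he : ¬e.IsDiag) :
    edgeRow e = Pi.single (esup e) 1 - Pi.single (einf e) 1 := by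
  have hne : einf e ≠ esup e := fun h => he (by rw [← mk_esup_einf e, h]; rfl)
  funext v
  by_cases h1 : v = esup e
  · subst h1; simp [edgeRow, hne.symm]
  by_cases h2 : v = einf e
  · subst h2; simp [edgeRow, hne]
  · simp [edgeRow, h1, h2]

lemma single_sub_single_mem_span_edgeRow {A : Set (Sym2 V)} {u w : V} (huw : s(u, w) ∈ A)
    (hne : u ≠ w) : Pi.single u 1 - Pi.single w 1 ∈ Submodule.span ℚ (edgeRow '' A) := by
  have hrow : edgeRow s(u, w) ∈ Submodule.span ℚ (edgeRow '' A) :=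
    Submodule.subset_span ⟨_, huw, rfl⟩
  rw [edgeRow_eq_single_sub_single (Sym2.mk_isDiag_iff.not.2 hne)] at hrow
  rcases Sym2.eq_iff.1 (mk_esup_einf s(u, w)) with ⟨hu, hw⟩ | ⟨hw, hu⟩
  · rwa [hu, hw] at hrow
  · rw [hu, hw, ← neg_sub] at hrow
    simpa using Submodule.neg_mem _ hrow

lemma single_sub_single_mem_span_of_reachable {A : Set (Sym2 V)} {u w : V}
    (h : (fromEdgeSet A).Reachable u w) :
    Pi.single u 1 - Pi.single w 1 ∈ Submodule.span ℚ (edgeRow '' A) := by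
  obtain ⟨p⟩ := h
  induction p with
  | nil => simp
  | @cons u x w hadj _ ih =>
    rw [fromEdgeSet_adj] at hadj
    rw [← sub_add_sub_cancel _ (Pi.single x (1 : ℚ))]
    exact Submodule.add_mem _ (single_sub_single_mem_span_edgeRow hadj.1 hadj.2) ih

theorem span_edgeRow_eq_of_spansFlat {F S : Set (Sym2 V)} (hF : ∀ e ∈ F, ¬e.IsDiag)
    (hSF : S ⊆ F) (hS : SpansFlat F S) :
    Submodule.span ℚ (edgeRow '' F) = Submodule.span ℚ (edgeRow '' S) := by
  refine le_antisymm (Submodule.span_le.2 ?_) (Submodule.span_mono (Set.image_mono hSF))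
  rintro _ ⟨e, he, rfl⟩
  rw [SetLike.mem_coe, edgeRow_eq_single_sub_single (hF e he)]
  exact single_sub_single_mem_span_of_reachable (hS _ _ ((mk_esup_einf e).symm ▸ he))

theorem linearIndependent_edgeRow {S : Set (Sym2 V)} (hS : S.InjOn esup) :
    LinearIndependent ℚ (fun e : S => edgeRow (e : Sym2 V)) :=
  linearIndependent_of_pivot (p := fun e : S => esup (e : Sym2 V))
    (fun e f h => Subtype.ext (hS e.2 f.2 h)) (fun e => by simp [edgeRow_esup])
    (fun _ _ => edgeRow_eq_zero_of_esup_lt)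

end EdgeRow

theorem stmt_4_general {V : Type*} [LinearOrder V] (G : SimpleGraph V)
    (F S : Finset (Sym2 V)) (hF : ↑F ⊆ G.edgeSet) (hSF : S ⊆ F)
    (hSspan : SpansFlat (↑F) (↑S : Set (Sym2 V)))
    (hinj : Set.InjOn esup (↑S : Set (Sym2 V))) :
    Submodule.span ℚ (edgeRow '' (↑F : Set (Sym2 V))) =
        Submodule.span ℚ (edgeRow '' (↑S : Set (Sym2 V))) ∧
      LinearIndependent ℚ (fun e : {x // x ∈ S} => edgeRow (e : Sym2 V)) ∧
      Module.finrank ℚ (Submodule.span ℚ (edgeRow '' (↑F : Set (Sym2 V)))) = S.card ∧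
      ∀ e ∈ S, edgeRow e (esup e) = 1 ∧ ∀ v : V, esup e < v → edgeRow e v = 0 := by
  have hspan := span_edgeRow_eq_of_spansFlat (fun e he => G.not_isDiag_of_mem_edgeSet (hF he))
    (Finset.coe_subset.2 hSF) hSspan
  have hli : LinearIndependent ℚ (fun e : {x // x ∈ S} => edgeRow (e : Sym2 V)) :=
    linearIndependent_edgeRow hinj
  refine ⟨hspan, hli, ?_, fun e _ => ⟨edgeRow_esup e, fun _ => edgeRow_eq_zero_of_esup_lt⟩⟩
  rw [hspan, Set.image_eq_range]
  exact (finrank_span_eq_card hli).trans (Fintype.card_coe S)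

/-- Gaussian elimination for the matrix of a flat: if `S ⊆ F` is a spanning forest of `Γ[F]`
with all larger endpoints distinct, then the rows indexed by `F` and by `S` have the same span,
the rows indexed by `S` are linearly independent (so the rank is `|S|`), and (with columns in
decreasing order) the leading entry of the row of `e ∈ S` is a `1` in the pivot column
`h(e)`. -/
theorem stmt_4 {V : Type*} [Fintype V] [LinearOrder V] (G : SimpleGraph V)
    (F S : Finset (Sym2 V)) (hF : ↑F ⊆ G.edgeSet) (hSF : S ⊆ F)
    (hforest : ∀ T ⊆ S, ¬IsCycleEdges G T)
    (hSspan : SpansFlat (↑F) (↑S : Set (Sym2 V)))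
    (hinj : Set.InjOn esup (↑S : Set (Sym2 V))) :
    Submodule.span ℚ (edgeRow '' (↑F : Set (Sym2 V))) =
        Submodule.span ℚ (edgeRow '' (↑S : Set (Sym2 V))) ∧
      LinearIndependent ℚ (fun e : {x // x ∈ S} => edgeRow (e : Sym2 V)) ∧
      Module.finrank ℚ (Submodule.span ℚ (edgeRow '' (↑F : Set (Sym2 V)))) = S.card ∧
      ∀ e ∈ S, edgeRow e (esup e) = 1 ∧ ∀ v : V, esup e < v → edgeRow e v = 0 :=
  stmt_4_general G F S hF hSF hSspan hinj
end

section
/- Let Γ = (V, E) be a graph and F a flat of the graphic matroid with S ⊆ F an nbc spanning forest of Γ[F] (all larger endpoints distinct). In the exterior algebra Λ over ℚ on generators x_v for v ∈ V, let I_F be the ideal generated by {x_{h(e)} - x_{t(e)} : e ∈ F}. Then the quotient Λ/I_F has ℚ-vector space basis given by the images of the square-free monomials x_{i_1} ⋯ x_{i_r} where no i_j equals h(e) for any e ∈ S. In particular dim_ℚ(Λ/I_F) = 2^{|V| - |S|}. -/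
open SimpleGraph

section ExtAlg

variable (V : Type*) [Fintype V] [LinearOrder V]

/-- The exterior algebra over `ℚ` with degree-one generators `x_v` for `v ∈ V`. -/
abbrev ExtV := ExteriorAlgebra ℚ (V → ℚ)

/-- The generator `x_v`. -/
noncomputable def xgen (v : V) : ExtV V := ExteriorAlgebra.ι ℚ (Pi.single v 1)

/-- The relation generating the ideal `I_F`: `x_{h(e)} - x_{t(e)}` for `e ∈ F`. -/
def relF (F : Finset (Sym2 V)) (a b : ExtV V) : Prop :=
  b = 0 ∧ ∃ e ∈ F, a = xgen V (esup e) - xgen V (einf e)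

/-- The square-free monomial `x_{i_1} ⋯ x_{i_r}` indexed by a subset `T ⊆ V`,
with the factors in increasing order. -/
noncomputable def xmon (T : Finset V) : ExtV V :=
  ((T.sort (· ≤ ·)).map (xgen V)).prod

end ExtAlg

/-!
Since every vertex is the head of at most one edge of `S`, descending along `S` from heads to
tails sends each vertex `v` to a root `ρ v` that is the head of no edge of `S`, and `ρ` is
constant on the components of `S`, which contain both endpoints of each edge of `F`. So
`x_v ↦ x_{ρ v}` factors through `Λ / I_F`, and together with the inclusion of the non-heads it
identifies `Λ / I_F` with the exterior algebra on the non-head vertices. The square-free monomials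
of that exterior algebra form a basis, which is the claim.
-/

section Endpoints

variable {V : Type*} [LinearOrder V]

lemma einf_lt_esup_of_not_isDiag {e : Sym2 V} (he : ¬e.IsDiag) : einf e < esup e := by
  induction e using Sym2.inductionOn with
  | hf a b => exact inf_lt_sup.2 (by simpa using he)

end Endpoints

section Root

variable {V : Type*} [LinearOrder V] [WellFoundedLT V]

/-- The root of the `S`-tree through `v`, reached by descending from heads to tails. -/
noncomputable def root (S : Set (Sym2 V)) : V → V :=
  open scoped Classical in
  WellFoundedLT.fix fun v IH =>
    if h : ∃ e ∈ S, einf e < esup e ∧ esup e = v then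
      IH (einf h.choose) (h.choose_spec.2.1.trans_eq h.choose_spec.2.2)
    else v

variable {S : Set (Sym2 V)}

open scoped Classical in
lemma root_eq (v : V) : root S v =
    if h : ∃ e ∈ S, einf e < esup e ∧ esup e = v then root S (einf h.choose) else v :=
  WellFoundedLT.fix_eq _ v

lemma root_eq_self {v : V} (hv : ∀ e ∈ S, esup e ≠ v) : root S v = v := by
  rw [root_eq, dif_neg]
  rintro ⟨e, he, -, rfl⟩
  exact hv e he rfl

lemma esup_ne_root (hS : ∀ e ∈ S, einf e < esup e) (v : V) :
    ∀ e ∈ S, esup e ≠ root S v := by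
  induction v using WellFoundedLT.induction with
  | _ v IH =>
    rw [root_eq]
    split_ifs with h
    · exact IH _ (h.choose_spec.2.1.trans_eq h.choose_spec.2.2)
    · exact fun e he hev => h ⟨e, he, hS e he, hev⟩

lemma apply_root_eq {X : Type*} (g : V → X)
    (hg : ∀ e ∈ S, einf e < esup e → g (esup e) = g (einf e)) (v : V) :
    g (root S v) = g v := by
  induction v using WellFoundedLT.induction with
  | _ v IH =>
    rw [root_eq]
    split_ifs with h
    · obtain ⟨he, hlt, hv⟩ := h.choose_spec
      rw [IH _ (hlt.trans_eq hv), ← hg _ he hlt, hv]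
    · rfl

lemma root_esup (hinj : Set.InjOn esup S) {e : Sym2 V} (he : e ∈ S) (hlt : einf e < esup e) :
    root S (esup e) = root S (einf e) := by
  have h : ∃ f ∈ S, einf f < esup f ∧ esup f = esup e := ⟨e, he, hlt, rfl⟩
  rw [root_eq, dif_pos h, hinj h.choose_spec.1 he h.choose_spec.2.2]

lemma root_eq_of_adj (hinj : Set.InjOn esup S) {a b : V} (h : (fromEdgeSet S).Adj a b) :
    root S a = root S b := by
  obtain ⟨hmem, hne⟩ := (fromEdgeSet_adj _).1 h
  have key := root_esup hinj hmem (einf_lt_esup_of_not_isDiag (by simpa using hne))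
  rcases le_total a b with hab | hab
  · simpa [hab] using key.symm
  · simpa [hab] using key

lemma root_eq_of_reachable (hinj : Set.InjOn esup S) {u w : V}
    (h : (fromEdgeSet S).Reachable u w) : root S u = root S w := by
  obtain ⟨p⟩ := h
  induction p with
  | nil => rfl
  | cons hadj _ ih => exact (root_eq_of_adj hinj hadj).trans ih

end Root

section Relabel

variable {α β : Type*} [Fintype α] [LinearOrder α] [LinearOrder β]

lemma extV_algHom_ext {A : Type*} [Semiring A] [Algebra ℚ A] {f g : ExtV α →ₐ[ℚ] A}
    (h : ∀ a, f (xgen α a) = g (xgen α a)) : f = g :=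
  ExteriorAlgebra.hom_ext <| (Pi.basisFun ℚ α).ext fun a => by simpa [xgen] using h a

lemma basisFun_exteriorAlgebra_apply (T : Finset α) :
    (Pi.basisFun ℚ α).ExteriorAlgebra T = xmon α T := by
  rw [ExteriorAlgebra.basis_apply_ofCard _ (rfl : T.card = T.card), ExteriorAlgebra.ιMulti_family,
    ExteriorAlgebra.ιMulti_apply, xmon]
  congr 1
  apply List.ext_getElem <;>
    simp [xgen, Set.powersetCard.ofFinEmbEquiv_symm_apply, Finset.orderEmbOfFin_apply]

noncomputable def relabel (f : α → β) : ExtV α →ₐ[ℚ] ExtV β :=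
  ExteriorAlgebra.map ((Pi.basisFun ℚ α).constr ℚ fun a => Pi.single (f a) 1)

@[simp]
lemma relabel_xgen (f : α → β) (a : α) : relabel f (xgen α a) = xgen β (f a) := by
  rw [relabel, xgen, ExteriorAlgebra.map_apply_ι, ← Pi.basisFun_apply ℚ,
    Module.Basis.constr_basis]
  rfl

lemma relabel_xmon {f : α → β} (hf : StrictMono f) (T : Finset α) :
    relabel f (xmon α T) = xmon β (T.map ⟨f, hf.injective⟩) := by
  rw [xmon, xmon, map_list_prod, List.map_map, ← (hf.strictMonoOn _).map_finsetSort, List.map_map]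
  congr 2
  ext a
  simp

end Relabel

section Quotient

variable {V : Type*} [LinearOrder V] {F S : Finset (Sym2 V)}

lemma mk_xgen_esup {e : Sym2 V} (he : e ∈ F) :
    RingQuot.mkAlgHom ℚ (relF V F) (xgen V (esup e)) =
      RingQuot.mkAlgHom ℚ (relF V F) (xgen V (einf e)) := by
  have hrel : relF V F (xgen V (esup e) - xgen V (einf e)) 0 := ⟨rfl, e, he, rfl⟩
  simpa [sub_eq_zero] using RingQuot.mkAlgHom_rel ℚ hrel

variable [Fintype V]

abbrev NonHead (S : Finset (Sym2 V)) := {v : V // ∀ e ∈ S, esup e ≠ v}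

lemma card_nonHead (hinj : Set.InjOn esup (↑S : Set (Sym2 V))) :
    Fintype.card (NonHead S) = Fintype.card V - S.card := by
  rw [Fintype.card_subtype, ← Finset.card_image_of_injOn hinj, ← Finset.card_compl]
  congr 1
  ext v
  simp

lemma mk_xgen_root (hSF : S ⊆ F) (v : V) :
    RingQuot.mkAlgHom ℚ (relF V F) (xgen V (root (S : Set (Sym2 V)) v)) =
      RingQuot.mkAlgHom ℚ (relF V F) (xgen V v) :=
  apply_root_eq (fun w => RingQuot.mkAlgHom ℚ (relF V F) (xgen V w))
    (fun _ he _ => mk_xgen_esup (hSF he)) v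

/-- The inverse sends `x_v` to `x_{root v}`; it kills `I_F` because every edge of `F` joins two
vertices of one `S`-component, on which `root` is constant. -/
noncomputable def quotientEquivNonHead (hSF : S ⊆ F) (hS : ∀ e ∈ S, einf e < esup e)
    (hspan : SpansFlat (↑F) (↑S : Set (Sym2 V))) (hinj : Set.InjOn esup (↑S : Set (Sym2 V))) :
    ExtV (NonHead S) ≃ₐ[ℚ] RingQuot (relF V F) :=
  AlgEquiv.ofAlgHom ((RingQuot.mkAlgHom ℚ _).comp (relabel Subtype.val))
    (RingQuot.liftAlgHom ℚ
      ⟨relabel fun v => ⟨root (S : Set (Sym2 V)) v, esup_ne_root hS v⟩, by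
        rintro _ _ ⟨rfl, e, he, rfl⟩
        have hreach := hspan (esup e) (einf e) ((mk_esup_einf e).symm ▸ he)
        simp [root_eq_of_reachable hinj hreach]⟩)
    (RingQuot.ringQuot_ext' _ _ _ <| extV_algHom_ext fun v => by simp [mk_xgen_root hSF])
    (extV_algHom_ext fun v => by simp [root_eq_self v.2])

lemma quotientEquivNonHead_xmon (hSF : S ⊆ F) (hS : ∀ e ∈ S, einf e < esup e)
    (hspan : SpansFlat (↑F) (↑S : Set (Sym2 V))) (hinj : Set.InjOn esup (↑S : Set (Sym2 V)))
    (U : Finset (NonHead S)) :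
    quotientEquivNonHead hSF hS hspan hinj (xmon _ U) =
      RingQuot.mkAlgHom ℚ (relF V F) (xmon V (U.map (Function.Embedding.subtype _))) :=
  congrArg _ (relabel_xmon (Subtype.strictMono_coe _) U)

def finsetNonHeadEquiv (S : Finset (Sym2 V)) :
    Finset (NonHead S) ≃ {T : Finset V // ∀ e ∈ S, esup e ∉ T} :=
  (Equiv.finsetSubtypeComm _).trans <| Equiv.subtypeEquivRight fun _ =>
    ⟨fun h e he heT => h _ heT e he rfl, fun h _ hv e he hev => h e he (hev ▸ hv)⟩

noncomputable def quotientBasis (hSF : S ⊆ F) (hS : ∀ e ∈ S, einf e < esup e)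
    (hspan : SpansFlat (↑F) (↑S : Set (Sym2 V))) (hinj : Set.InjOn esup (↑S : Set (Sym2 V))) :
    Module.Basis {T : Finset V // ∀ e ∈ S, esup e ∉ T} ℚ (RingQuot (relF V F)) :=
  ((Pi.basisFun ℚ (NonHead S)).ExteriorAlgebra.map
    (quotientEquivNonHead hSF hS hspan hinj).toLinearEquiv).reindex (finsetNonHeadEquiv S)

lemma quotientBasis_apply (hSF : S ⊆ F) (hS : ∀ e ∈ S, einf e < esup e)
    (hspan : SpansFlat (↑F) (↑S : Set (Sym2 V))) (hinj : Set.InjOn esup (↑S : Set (Sym2 V)))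
    (T : {T : Finset V // ∀ e ∈ S, esup e ∉ T}) :
    quotientBasis hSF hS hspan hinj T = RingQuot.mkAlgHom ℚ (relF V F) (xmon V T.1) := by
  rw [quotientBasis, Module.Basis.reindex_apply, Module.Basis.map_apply,
    basisFun_exteriorAlgebra_apply, AlgEquiv.toLinearEquiv_apply, quotientEquivNonHead_xmon]
  congr 2
  exact congrArg Subtype.val ((finsetNonHeadEquiv S).apply_symm_apply T)

end Quotient

theorem stmt_5_general {V : Type*} [Fintype V] [LinearOrder V] (G : SimpleGraph V)
    (F S : Finset (Sym2 V)) (hF : ↑F ⊆ G.edgeSet) (hSF : S ⊆ F)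
    (hSspan : SpansFlat (↑F) (↑S : Set (Sym2 V)))
    (hinj : Set.InjOn esup (↑S : Set (Sym2 V))) :
    LinearIndependent ℚ
        (fun T : {T : Finset V // ∀ e ∈ S, esup e ∉ T} =>
          RingQuot.mkAlgHom ℚ (relF V F) (xmon V T.1)) ∧
      Submodule.span ℚ
          (Set.range (fun T : {T : Finset V // ∀ e ∈ S, esup e ∉ T} =>
            RingQuot.mkAlgHom ℚ (relF V F) (xmon V T.1))) = ⊤ ∧
      Module.finrank ℚ (RingQuot (relF V F)) = 2 ^ (Fintype.card V - S.card) := by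
  have hS : ∀ e ∈ S, einf e < esup e := fun e he =>
    einf_lt_esup_of_not_isDiag (G.not_isDiag_of_mem_edgeSet (hF (hSF he)))
  have hb : ⇑(quotientBasis hSF hS hSspan hinj) =
      fun T => RingQuot.mkAlgHom ℚ (relF V F) (xmon V T.1) :=
    funext (quotientBasis_apply hSF hS hSspan hinj)
  refine ⟨hb ▸ (quotientBasis hSF hS hSspan hinj).linearIndependent,
    hb ▸ (quotientBasis hSF hS hSspan hinj).span_eq, ?_⟩
  rw [← (quotientEquivNonHead hSF hS hSspan hinj).toLinearEquiv.finrank_eq,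
    Module.finrank_eq_card_basis (Pi.basisFun ℚ (NonHead S)).ExteriorAlgebra, Fintype.card_finset,
    card_nonHead hinj]

/-- Let `F` be a flat of the graphic matroid of `Γ` and `S ⊆ F` a spanning forest of `Γ[F]`
whose edges have distinct larger endpoints.  In the exterior algebra on `x_v (v ∈ V)` modulo
the ideal generated by `x_{h(e)} - x_{t(e)}` for `e ∈ F`, the images of the square-free
monomials avoiding the larger endpoints of edges of `S` form a `ℚ`-basis, and the quotient
has dimension `2 ^ (|V| - |S|)`. -/
theorem stmt_5 {V : Type*} [Fintype V] [LinearOrder V] (G : SimpleGraph V)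
    (F S : Finset (Sym2 V)) (hF : ↑F ⊆ G.edgeSet) (hSF : S ⊆ F)
    (hforest : ∀ T ⊆ S, ¬IsCycleEdges G T)
    (hSspan : SpansFlat (↑F) (↑S : Set (Sym2 V)))
    (hinj : Set.InjOn esup (↑S : Set (Sym2 V))) :
    LinearIndependent ℚ
        (fun T : {T : Finset V // ∀ e ∈ S, esup e ∉ T} =>
          RingQuot.mkAlgHom ℚ (relF V F) (xmon V T.1)) ∧
      Submodule.span ℚ
          (Set.range (fun T : {T : Finset V // ∀ e ∈ S, esup e ∉ T} =>
            RingQuot.mkAlgHom ℚ (relF V F) (xmon V T.1))) = ⊤ ∧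
      Module.finrank ℚ (RingQuot (relF V F)) = 2 ^ (Fintype.card V - S.card) :=
  stmt_5_general G F S hF hSF hSspan hinj
end

section
/- Let Γ = (V, E) be a chordal graph with a perfect elimination ordering, and let v be the maximal vertex. Then the edge set of Γ − v is a modular flat of the graphic matroid of Γ. -/
open SimpleGraph

/-- `F` is a flat of the graphic matroid of `G`. -/
def IsGraphicFlat {V : Type*} (G : SimpleGraph V) (F : Set (Sym2 V)) : Prop :=
  F ⊆ G.edgeSet ∧
    ∀ u w : V, G.Adj u w → (SimpleGraph.fromEdgeSet F).Reachable u w → s(u, w) ∈ F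

/-- The rank of a set of edges in the graphic matroid on the vertex set `V`:
`|V|` minus the number of connected components of the spanning subgraph with edge set `F`. -/
noncomputable def graphicRank (V : Type*) [Fintype V] (F : Set (Sym2 V)) : ℕ :=
  Fintype.card V - Nat.card (SimpleGraph.fromEdgeSet F).ConnectedComponent


section Aux

variable {V : Type*}

private lemma reach_isolated {H : SimpleGraph V} {v x : V} (hiso : ∀ y, ¬ H.Adj v y)
    (h : H.Reachable x v) : x = v := by
  obtain ⟨w⟩ := h.symm
  cases w with
  | nil => rfl
  | cons h p => exact absurd h (hiso _)

private lemma reach_char {H H' : SimpleGraph V} (hle : H ≤ H') {v u : V}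
    (hiso : ∀ y, ¬ H.Adj v y)
    (hedge : ∀ x y, H'.Adj x y → ¬ H.Adj x y → x = v ∨ y = v)
    (hnbr : ∀ y, H'.Adj v y → H.Reachable y u) :
    ∀ x y, H'.Reachable x y →
      H.Reachable x y ∨ ((x = v ∨ H.Reachable x u) ∧ (y = v ∨ H.Reachable y u)) := by
  have htrans : ∀ x y z : V,
      (H.Reachable x y ∨ ((x = v ∨ H.Reachable x u) ∧ (y = v ∨ H.Reachable y u))) →
      (H.Reachable y z ∨ ((y = v ∨ H.Reachable y u) ∧ (z = v ∨ H.Reachable z u))) →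
      (H.Reachable x z ∨ ((x = v ∨ H.Reachable x u) ∧ (z = v ∨ H.Reachable z u))) := by
    rintro x y z (hxy | ⟨hx, hy⟩) (hyz | ⟨hy', hz⟩)
    · exact Or.inl (hxy.trans hyz)
    · refine Or.inr ⟨?_, hz⟩
      rcases hy' with rfl | hyu
      · exact Or.inl (reach_isolated hiso hxy)
      · exact Or.inr (hxy.trans hyu)
    · refine Or.inr ⟨hx, ?_⟩
      rcases hy with rfl | hyu
      · exact Or.inl (reach_isolated hiso hyz.symm)
      · exact Or.inr (hyz.symm.trans hyu)
    · exact Or.inr ⟨hx, hz⟩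
  intro x y hxy
  obtain ⟨w⟩ := hxy
  induction w with
  | nil => exact Or.inl (Reachable.refl _)
  | @cons a b c h p ih =>
    refine htrans a b c ?_ ih
    by_cases hH : H.Adj a b
    · exact Or.inl hH.reachable
    · rcases hedge a b h hH with h1 | h1
      · rw [h1] at h
        exact Or.inr ⟨Or.inl h1, Or.inr (hnbr _ h)⟩
      · rw [h1] at h
        exact Or.inr ⟨Or.inr (hnbr _ h.symm), Or.inl h1⟩

private lemma card_cc_succ [Fintype V] {H H' : SimpleGraph V} (hle : H ≤ H') {v u : V}
    (huv : H'.Adj v u)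
    (hiso : ∀ y, ¬ H.Adj v y)
    (hedge : ∀ x y, H'.Adj x y → ¬ H.Adj x y → x = v ∨ y = v)
    (hnbr : ∀ y, H'.Adj v y → H.Reachable y u) :
    Nat.card H.ConnectedComponent = Nat.card H'.ConnectedComponent + 1 := by
  classical
  have hkey := reach_char hle hiso hedge hnbr
  have hrv : ∀ x, H'.Reachable x v → x = v ∨ H.Reachable x u := by
    intro x hx
    rcases hkey x v hx with h | ⟨hx', _⟩
    · exact Or.inl (reach_isolated hiso h)
    · exact hx'
  set g : V → H.ConnectedComponent := fun x =>
    if H'.Reachable x v then H.connectedComponentMk u else H.connectedComponentMk x with hg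
  have hf : ∀ (x y : V), H'.Reachable x y → g x = g y := by
    intro x y hxy
    by_cases hx : H'.Reachable x v
    · have hy : H'.Reachable y v := hxy.symm.trans hx
      simp [hg, hx, hy]
    · have hy : ¬ H'.Reachable y v := fun hy => hx (hxy.trans hy)
      simp only [hg, hx, hy, if_false]
      rcases hkey x y hxy with h | ⟨hx', _⟩
      · exact ConnectedComponent.sound h
      · rcases hx' with rfl | hxu
        · exact absurd (Reachable.refl _) hx
        · exact absurd ((hxu.map (Hom.ofLE hle)).trans
            huv.symm.reachable) hx
  have e : H.ConnectedComponent ≃ (H'.ConnectedComponent ⊕ Unit) :=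
    { toFun := fun c => if c = H.connectedComponentMk v then Sum.inr ()
        else Sum.inl (c.map (Hom.ofLE hle))
      invFun := Sum.elim
        (ConnectedComponent.lift g (fun x y p _ => hf x y p.reachable))
        (fun _ => H.connectedComponentMk v)
      left_inv := by
        refine ConnectedComponent.ind (fun x => ?_)
        dsimp only
        by_cases hc : H.connectedComponentMk x = H.connectedComponentMk v
        · rw [if_pos hc, hc]
          rfl
        · rw [if_neg hc]
          simp only [ConnectedComponent.map_mk, Sum.elim_inl, ConnectedComponent.lift_mk]
          by_cases hx : H'.Reachable ((Hom.ofLE hle) x) v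
          · rcases hrv _ hx with h | h
            · exact absurd (by rw [show x = v from h]) hc
            · simp only [hg, hx, if_pos]
              exact (ConnectedComponent.sound h).symm
          · simp only [hg, hx, if_neg, if_false]
            rfl
      right_inv := by
        rintro (c | ⟨⟩)
        · refine ConnectedComponent.ind (fun x => ?_) c
          dsimp only
          simp only [Sum.elim_inl, ConnectedComponent.lift_mk]
          by_cases hx : H'.Reachable x v
          · simp only [hg, hx, if_pos]
            have huvne : H.connectedComponentMk u ≠ H.connectedComponentMk v := by
              intro h
              exact huv.ne' (reach_isolated hiso (ConnectedComponent.exact h))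
            rw [if_neg huvne]
            simp only [ConnectedComponent.map_mk]
            exact congrArg Sum.inl
              (ConnectedComponent.sound (huv.symm.reachable.trans hx.symm))
          · simp only [hg, hx, if_neg, if_false]
            have hc : H.connectedComponentMk x ≠ H.connectedComponentMk v := by
              intro h
              exact hx ((ConnectedComponent.exact h).map (Hom.ofLE hle))
            rw [if_neg hc]
            simp only [ConnectedComponent.map_mk]
            rfl
        · simp }
  rw [Nat.card_congr e, Nat.card_sum]
  simp

private lemma card_cc_le [Fintype V] (H : SimpleGraph V) :
    Nat.card H.ConnectedComponent ≤ Fintype.card V := by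
  rw [← Nat.card_eq_fintype_card]
  exact Nat.card_le_card_of_surjective H.connectedComponentMk
    (fun c => c.ind (fun w => ⟨w, rfl⟩) : Function.Surjective _)

end Aux

/-- If `v` is the maximal vertex of a perfect elimination ordering of a chordal graph `Γ`,
then the edge set of `Γ − v` is a modular flat of the graphic matroid of `Γ`:
it is a flat, and `rk(F) + rk(G') = rk(F ∨ G') + rk(F ∧ G')` for every flat `G'`. -/
theorem stmt_12 {V : Type*} [Fintype V] [LinearOrder V] (G : SimpleGraph V)
    (hchordal : G.IsChordal) (hpeo : IsPEO G) (v : V) (hmax : ∀ u : V, u ≤ v) :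
    IsGraphicFlat G {e ∈ G.edgeSet | v ∉ e} ∧
      ∀ F' : Set (Sym2 V), IsGraphicFlat G F' →
        graphicRank V {e ∈ G.edgeSet | v ∉ e} + graphicRank V F' =
          graphicRank V ({e ∈ G.edgeSet | v ∉ e} ∪ F') +
            graphicRank V ({e ∈ G.edgeSet | v ∉ e} ∩ F') := by
  classical
  set F : Set (Sym2 V) := {e ∈ G.edgeSet | v ∉ e} with hF
  have hnv : ∀ x y : V, (fromEdgeSet F).Reachable x y → x ≠ y → x ≠ v := by
    intro x y hr hne
    obtain ⟨p⟩ := hr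
    cases p with
    | nil => exact absurd rfl hne
    | cons h _ =>
      rw [fromEdgeSet_adj] at h
      rintro rfl
      exact h.1.2 (Sym2.mem_mk_left _ _)
  have hflat : IsGraphicFlat G F := by
    refine ⟨fun e he => he.1, fun x y hadj hr => ?_⟩
    have hx : x ≠ v := hnv x y hr hadj.ne
    have hy : y ≠ v := hnv y x hr.symm hadj.ne'
    refine ⟨hadj, ?_⟩
    rw [Sym2.mem_iff]
    rintro (rfl | rfl)
    · exact hx rfl
    · exact hy rfl
  refine ⟨hflat, ?_⟩
  intro F' hF'
  have hclique : ∀ y u : V, y ≠ u → s(y, v) ∈ F' → s(u, v) ∈ F' →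
      s(y, u) ∈ F ∧ s(y, u) ∈ F' := by
    intro y u hne hy hu
    have hyv : G.Adj y v := (hF'.1 hy)
    have huv : G.Adj u v := (hF'.1 hu)
    have hadj : G.Adj y u :=
      hpeo v y u (lt_of_le_of_ne (hmax y) hyv.ne) (lt_of_le_of_ne (hmax u) huv.ne)
        hne hyv huv
    have hr : (fromEdgeSet F').Reachable y u := by
      have h1 : (fromEdgeSet F').Adj y v := by
        rw [fromEdgeSet_adj]; exact ⟨hy, hyv.ne⟩
      have h2 : (fromEdgeSet F').Adj v u := by
        rw [fromEdgeSet_adj, Sym2.eq_swap]; exact ⟨hu, huv.ne'⟩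
      exact h1.reachable.trans h2.reachable
    have hmem : s(y, u) ∈ F' := hF'.2 y u hadj hr
    refine ⟨⟨hadj, ?_⟩, hmem⟩
    rw [Sym2.mem_iff]
    rintro (rfl | rfl)
    · exact hyv.ne rfl
    · exact huv.ne rfl
  by_cases hN : ∃ u : V, s(u, v) ∈ F'
  · obtain ⟨u, hu⟩ := hN
    have huvne : u ≠ v := (hF'.1 hu).ne
    have h1 : Nat.card (fromEdgeSet F).ConnectedComponent =
        Nat.card (fromEdgeSet (F ∪ F')).ConnectedComponent + 1 := by
      refine card_cc_succ (fromEdgeSet_mono Set.subset_union_left) (v := v) (u := u)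
        ?_ ?_ ?_ ?_
      · rw [fromEdgeSet_adj, Sym2.eq_swap]
        exact ⟨Or.inr hu, fun h => huvne h.symm⟩
      · intro y h
        rw [fromEdgeSet_adj] at h
        exact h.1.2 (Sym2.mem_mk_left _ _)
      · intro x y h hH
        rw [fromEdgeSet_adj] at h hH
        by_contra hc
        push_neg at hc
        have hv : v ∉ s(x, y) := by
          rw [Sym2.mem_iff]
          rintro (rfl | rfl)
          · exact hc.1 rfl
          · exact hc.2 rfl
        rcases h.1 with hmem | hmem
        · exact hH ⟨hmem, h.2⟩
        · exact hH ⟨⟨hF'.1 hmem, hv⟩, h.2⟩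
      · intro y h
        rw [fromEdgeSet_adj] at h
        have hmem : s(v, y) ∈ F' := by
          rcases h.1 with hmem | hmem
          · exact absurd (Sym2.mem_mk_left _ _) hmem.2
          · exact hmem
        by_cases hyu : y = u
        · subst hyu; exact Reachable.refl _
        · have := hclique y u hyu (by rwa [Sym2.eq_swap]) hu
          exact (SimpleGraph.Adj.reachable (by rw [fromEdgeSet_adj]; exact ⟨this.1, hyu⟩))
    have h2 : Nat.card (fromEdgeSet (F ∩ F')).ConnectedComponent =
        Nat.card (fromEdgeSet F').ConnectedComponent + 1 := by
      refine card_cc_succ (fromEdgeSet_mono Set.inter_subset_right) (v := v) (u := u)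
        ?_ ?_ ?_ ?_
      · rw [fromEdgeSet_adj, Sym2.eq_swap]
        exact ⟨hu, fun h => huvne h.symm⟩
      · intro y h
        rw [fromEdgeSet_adj] at h
        exact h.1.1.2 (Sym2.mem_mk_left _ _)
      · intro x y h hH
        rw [fromEdgeSet_adj] at h hH
        by_contra hc
        push_neg at hc
        have hv : v ∉ s(x, y) := by
          rw [Sym2.mem_iff]
          rintro (rfl | rfl)
          · exact hc.1 rfl
          · exact hc.2 rfl
        exact hH ⟨⟨⟨hF'.1 h.1, hv⟩, h.1⟩, h.2⟩
      · intro y h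
        rw [fromEdgeSet_adj] at h
        by_cases hyu : y = u
        · subst hyu; exact Reachable.refl _
        · have := hclique y u hyu (by rw [Sym2.eq_swap]; exact h.1) hu
          exact (SimpleGraph.Adj.reachable
            (by rw [fromEdgeSet_adj]; exact ⟨⟨this.1, this.2⟩, hyu⟩))
    have b1 := card_cc_le (fromEdgeSet F)
    have b2 := card_cc_le (fromEdgeSet F')
    have b3 := card_cc_le (fromEdgeSet (F ∪ F'))
    have b4 := card_cc_le (fromEdgeSet (F ∩ F'))
    simp only [graphicRank]
    omega
  · push_neg at hN
    have hsub : F' ⊆ F := by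
      intro e he
      refine ⟨hF'.1 he, fun hv => ?_⟩
      obtain ⟨b, rfl⟩ := Sym2.mem_iff_exists.mp hv
      exact hN b (by rwa [Sym2.eq_swap])
    rw [Set.union_eq_self_of_subset_right hsub, Set.inter_eq_self_of_subset_right hsub]
end
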